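/- (Brézis–Gallouët-type inequality in sequence form, 2D.) There is an absolute constant $C$ such that for every sequence $(\hat u(k))_{k\in\mathbb{Z}^2}$ with $\hat u(0)=0$, and every real $\lambda \geq e$, $\sum_{k \neq 0} |\hat u(k)| \leq C (\log \lambda)^{1/2} \left(\sum_k |k|^2 |\hat u(k)|^2\right)^{1/2} + C \lambda^{-1} \left(\sum_k |k|^4 |\hat u(k)|^2\right)^{1/2}$. -/

import Mathlib

/-!
Write `|û(k)| = |k|⁻¹ · |k||û(k)|` for `0 < |k| ≤ λ` and `|û(k)| = |k|⁻² · |k|²|û(k)|` for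
`|k| > λ`, and apply Cauchy–Schwarz to each part. What remains are the lattice sums
`∑_{0<|k|≤λ} |k|⁻² ≤ 8 (1 + log λ)` and `∑_{|k|>λ} |k|⁻⁴ ≤ 64 λ⁻²`, obtained by grouping the
lattice points into the square shells `max(|k₀|, |k₁|) = n`, each of which has `8n` points.
-/

/-- Euclidean norm of a lattice vector `k ∈ ℤ²`. -/
noncomputable def nrm (k : Fin 2 → ℤ) : ℝ := Real.sqrt (∑ i, ((k i : ℝ)) ^ 2)

open Finset

theorem Real.summable_mul_and_tsum_mul_le_sqrt_mul_sqrt {ι : Type*} {f g : ι → ℝ}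
    (hf : ∀ i, 0 ≤ f i) (hg : ∀ i, 0 ≤ g i)
    (hf2 : Summable fun i => f i ^ 2) (hg2 : Summable fun i => g i ^ 2) :
    (Summable fun i => f i * g i) ∧
      ∑' i, f i * g i ≤ √(∑' i, f i ^ 2) * √(∑' i, g i ^ 2) := by
  simp only [← Real.rpow_two] at hf2 hg2 ⊢
  simpa only [Real.sqrt_eq_rpow] using
    Real.summable_and_inner_le_Lp_mul_Lq_tsum_of_nonneg .two_two hf hg hf2 hg2

/- The low weight `(ν i ^ 2)⁻¹` vanishes at `ν i = 0` (as `0⁻¹ = 0`), so it lives on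
`0 < ν i ≤ lam`. -/
theorem tsum_le_of_frequency_split {ι : Type*} {a ν : ι → ℝ} (ha : ∀ i, 0 ≤ a i)
    (hν : ∀ i, 0 ≤ ν i) (ha0 : ∀ i, ν i = 0 → a i = 0) (lam : ℝ)
    (hlow : Summable fun i => if ν i ≤ lam then (ν i ^ 2)⁻¹ else 0)
    (hhigh : Summable fun i => if lam < ν i then (ν i ^ 4)⁻¹ else 0)
    (h2 : Summable fun i => ν i ^ 2 * a i ^ 2) (h4 : Summable fun i => ν i ^ 4 * a i ^ 2) :
    ∑' i, a i ≤
      √(∑' i, if ν i ≤ lam then (ν i ^ 2)⁻¹ else 0) * √(∑' i, ν i ^ 2 * a i ^ 2) +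
      √(∑' i, if lam < ν i then (ν i ^ 4)⁻¹ else 0) * √(∑' i, ν i ^ 4 * a i ^ 2) := by
  set w₁ : ι → ℝ := fun i => if ν i ≤ lam then (ν i)⁻¹ else 0
  set w₂ : ι → ℝ := fun i => if lam < ν i then (ν i ^ 2)⁻¹ else 0
  have hw₁ : ∀ i, w₁ i ^ 2 = if ν i ≤ lam then (ν i ^ 2)⁻¹ else 0 := fun i => by
    simp only [w₁]; split_ifs <;> simp
  have hw₂ : ∀ i, w₂ i ^ 2 = if lam < ν i then (ν i ^ 4)⁻¹ else 0 := fun i => by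
    simp only [w₂]; split_ifs <;> ring
  have hdecomp : ∀ i, a i = w₁ i * (ν i * a i) + w₂ i * (ν i ^ 2 * a i) := fun i => by
    rcases eq_or_ne (ν i) 0 with h | h
    · simp [ha0 i h]
    · simp only [w₁, w₂]; split_ifs <;> first | (exfalso; linarith) | (field_simp; ring)
  obtain ⟨hs₁, hle₁⟩ := Real.summable_mul_and_tsum_mul_le_sqrt_mul_sqrt
    (f := w₁) (g := fun i => ν i * a i) (fun i => by simp only [w₁]; split_ifs <;> simp [hν i])
    (fun i => mul_nonneg (hν i) (ha i)) (by simpa only [hw₁] using hlow)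
    (by simpa only [mul_pow] using h2)
  obtain ⟨hs₂, hle₂⟩ := Real.summable_mul_and_tsum_mul_le_sqrt_mul_sqrt
    (f := w₂) (g := fun i => ν i ^ 2 * a i) (fun i => by simp only [w₂]; split_ifs <;> positivity)
    (fun i => mul_nonneg (by positivity) (ha i)) (by simpa only [hw₂] using hhigh)
    (by simpa only [mul_pow, ← pow_mul] using h4)
  simp only [hw₁, hw₂, mul_pow, ← pow_mul] at hle₁ hle₂
  calc ∑' i, a i = ∑' i, w₁ i * (ν i * a i) + ∑' i, w₂ i * (ν i ^ 2 * a i) := by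
        rw [← hs₁.tsum_add hs₂]; exact tsum_congr hdecomp
    _ ≤ _ := add_le_add hle₁ hle₂

def supNat (k : Fin 2 → ℤ) : ℕ := max (k 0).natAbs (k 1).natAbs

theorem supNat_le_nrm (k : Fin 2 → ℤ) : (supNat k : ℝ) ≤ nrm k := by
  refine Real.le_sqrt_of_sq_le ?_
  simp only [supNat, Fin.sum_univ_two, Nat.cast_max, Nat.cast_natAbs, Int.cast_abs]
  rcases max_choice |(k 0 : ℝ)| |(k 1 : ℝ)| with h | h <;> rw [h, sq_abs] <;> nlinarith

theorem nrm_le_two_mul_supNat (k : Fin 2 → ℤ) : nrm k ≤ 2 * supNat k := by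
  refine Real.sqrt_le_iff.mpr ⟨by positivity, ?_⟩
  simp only [supNat, Fin.sum_univ_two, Nat.cast_max, Nat.cast_natAbs, Int.cast_abs]
  nlinarith [le_max_left |(k 0 : ℝ)| |(k 1 : ℝ)|, le_max_right |(k 0 : ℝ)| |(k 1 : ℝ)|,
    sq_abs (k 0 : ℝ), sq_abs (k 1 : ℝ), abs_nonneg (k 0 : ℝ), abs_nonneg (k 1 : ℝ)]

theorem card_filter_supNat_eq_le (s : Finset (Fin 2 → ℤ)) (n : ℕ) (hn : n ≠ 0) :
    #{k ∈ s | supNat k = n} ≤ 8 * n := by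
  rw [← Int.card_box hn]
  refine card_le_card_of_injOn (finTwoArrowEquiv ℤ) (fun k hk => ?_)
    (finTwoArrowEquiv ℤ).injective.injOn
  simpa [supNat] using (mem_filter.mp hk).2

theorem sum_comp_supNat_le {G : ℕ → ℝ} (hG : ∀ n, 0 ≤ G n) (hG0 : G 0 = 0)
    (s : Finset (Fin 2 → ℤ)) :
    ∑ k ∈ s, G (supNat k) ≤ ∑ n ∈ s.image supNat, 8 * n * G n := by
  rw [← sum_fiberwise_of_maps_to (fun k hk => mem_image_of_mem supNat hk)]
  refine sum_le_sum fun n _ => ?_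
  rw [sum_congr rfl fun k hk => congrArg G (mem_filter.mp hk).2, sum_const, nsmul_eq_mul]
  rcases eq_or_ne n 0 with rfl | hn
  · simp [hG0]
  · exact mul_le_mul_of_nonneg_right (by exact_mod_cast card_filter_supNat_eq_le s n hn) (hG n)

theorem sum_ite_inv_le_one_add_log {x : ℝ} (hx : 1 ≤ x) (t : Finset ℕ) :
    ∑ n ∈ t, (if (n : ℝ) ≤ x then (n : ℝ)⁻¹ else 0) ≤ 1 + Real.log x := by
  have hfloor : (0 : ℝ) < ⌊x⌋₊ := by exact_mod_cast Nat.floor_pos.mpr hx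
  calc ∑ n ∈ t, (if (n : ℝ) ≤ x then (n : ℝ)⁻¹ else 0)
      = ∑ n ∈ t.filter (fun n : ℕ => (n : ℝ) ≤ x), (n : ℝ)⁻¹ := (sum_filter _ _).symm
    _ ≤ ∑ n ∈ range (⌊x⌋₊ + 1), (n : ℝ)⁻¹ := by
        refine sum_le_sum_of_subset_of_nonneg (fun n hn => ?_) fun _ _ _ => by positivity
        exact mem_range_succ_iff.mpr (Nat.le_floor (mem_filter.mp hn).2)
    _ = harmonic ⌊x⌋₊ := by simp [sum_range_succ', harmonic]
    _ ≤ 1 + Real.log ⌊x⌋₊ := harmonic_le_one_add_log _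
    _ ≤ 1 + Real.log x := by gcongr; exact Nat.floor_le (by linarith)

theorem sum_ite_inv_sq_le {x : ℝ} (hx : 0 < x) (t : Finset ℕ) :
    ∑ n ∈ t, (if x < n then ((n : ℝ) ^ 2)⁻¹ else 0) ≤ 2 / x := by
  calc ∑ n ∈ t, (if x < n then ((n : ℝ) ^ 2)⁻¹ else 0)
      = ∑ n ∈ t.filter (fun n : ℕ => x < n), ((n : ℝ) ^ 2)⁻¹ := (sum_filter _ _).symm
    _ ≤ ∑ n ∈ Ioo ⌊x⌋₊ (t.sup id + 1), ((n : ℝ) ^ 2)⁻¹ := by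
        refine sum_le_sum_of_subset_of_nonneg (fun n hn => ?_) fun _ _ _ => by positivity
        obtain ⟨hnt, hxn⟩ := mem_filter.mp hn
        exact mem_Ioo.mpr ⟨(Nat.floor_lt hx.le).mpr hxn,
          Nat.lt_succ_of_le (le_sup (f := id) hnt)⟩
    _ ≤ 2 / (⌊x⌋₊ + 1) := sum_Ioo_inv_sq_le _ _
    _ ≤ 2 / x := by gcongr; exact (Nat.lt_floor_add_one x).le

theorem inv_nrm_pow_le_inv_supNat_pow (k : Fin 2 → ℤ) (m : ℕ) :
    (nrm k ^ m)⁻¹ ≤ ((supNat k : ℝ) ^ m)⁻¹ := by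
  rcases eq_or_ne (supNat k) 0 with h | h
  · have : nrm k = 0 := le_antisymm (by simpa [h] using nrm_le_two_mul_supNat k)
      (Real.sqrt_nonneg _)
    simp [this, h]
  · exact inv_anti₀ (by positivity) (pow_le_pow_left₀ (by positivity) (supNat_le_nrm k) m)

theorem sum_inv_nrm_sq_le {lam : ℝ} (hlam : 1 ≤ lam) (s : Finset (Fin 2 → ℤ)) :
    ∑ k ∈ s, (if nrm k ≤ lam then (nrm k ^ 2)⁻¹ else 0) ≤ 8 * (1 + Real.log lam) := by
  set G : ℕ → ℝ := fun n => if (n : ℝ) ≤ lam then ((n : ℝ) ^ 2)⁻¹ else 0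
  have hG : ∀ n, 0 ≤ G n := fun n => by simp only [G]; split_ifs <;> positivity
  calc ∑ k ∈ s, (if nrm k ≤ lam then (nrm k ^ 2)⁻¹ else 0)
      ≤ ∑ k ∈ s, G (supNat k) := sum_le_sum fun k _ => by
        simp only [G]
        split_ifs with h₁ h₂
        · exact inv_nrm_pow_le_inv_supNat_pow k 2
        · exact absurd ((supNat_le_nrm k).trans h₁) h₂
        · positivity
        · rfl
    _ ≤ ∑ n ∈ s.image supNat, 8 * n * G n := sum_comp_supNat_le hG (by simp [G]) s
    _ = 8 * ∑ n ∈ s.image supNat, (if (n : ℝ) ≤ lam then (n : ℝ)⁻¹ else 0) := by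
        rw [mul_sum]
        refine sum_congr rfl fun n _ => ?_
        simp only [G]
        split_ifs
        · field_simp
        · simp
    _ ≤ 8 * (1 + Real.log lam) := by gcongr; exact sum_ite_inv_le_one_add_log hlam _

theorem sum_inv_nrm_pow_four_le {lam : ℝ} (hlam : 0 < lam) (s : Finset (Fin 2 → ℤ)) :
    ∑ k ∈ s, (if lam < nrm k then (nrm k ^ 4)⁻¹ else 0) ≤ 64 / lam ^ 2 := by
  set G : ℕ → ℝ := fun n => if lam < 2 * n then ((n : ℝ) ^ 4)⁻¹ else 0
  have hG : ∀ n, 0 ≤ G n := fun n => by simp only [G]; split_ifs <;> positivity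
  calc ∑ k ∈ s, (if lam < nrm k then (nrm k ^ 4)⁻¹ else 0)
      ≤ ∑ k ∈ s, G (supNat k) := sum_le_sum fun k _ => by
        simp only [G]
        split_ifs with h₁ h₂
        · exact inv_nrm_pow_le_inv_supNat_pow k 4
        · exact absurd (h₁.trans_le (nrm_le_two_mul_supNat k)) h₂
        · positivity
        · rfl
    _ ≤ ∑ n ∈ s.image supNat, 8 * n * G n := sum_comp_supNat_le hG (by simp [G]) s
    _ ≤ 16 / lam * ∑ n ∈ s.image supNat, (if lam / 2 < n then ((n : ℝ) ^ 2)⁻¹ else 0) := by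
        rw [mul_sum]
        refine sum_le_sum fun n _ => ?_
        simp only [G]
        split_ifs with h₁ h₂
        · have hn : (0 : ℝ) < n := by linarith
          rw [div_mul_eq_mul_div, le_div_iff₀ hlam]
          field_simp
          nlinarith
        · exact absurd (by linarith) h₂
        · rw [mul_zero]; positivity
        · simp
    _ ≤ 16 / lam * (2 / (lam / 2)) := by gcongr; exact sum_ite_inv_sq_le (by positivity) _
    _ = 64 / lam ^ 2 := by field_simp; ring

theorem eq_zero_of_nrm_eq_zero {k : Fin 2 → ℤ} (h : nrm k = 0) : k = 0 := by
  have : supNat k = 0 := by exact_mod_cast le_antisymm (h ▸ supNat_le_nrm k) (Nat.cast_nonneg _)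
  ext i
  fin_cases i <;> simp_all [supNat]

/-- Brézis–Gallouët-type inequality in sequence form (2D): there is an absolute constant `C`
such that for every sequence with `û(0)=0` and every `λ ≥ e`,
`∑_{k≠0} |û(k)| ≤ C (log λ)^{1/2} (∑|k|²|û(k)|²)^{1/2} + C λ⁻¹ (∑|k|⁴|û(k)|²)^{1/2}`. -/
theorem stmt13 :
    ∃ C : ℝ, 0 < C ∧
      ∀ u : (Fin 2 → ℤ) → ℂ, u 0 = 0 →
        Summable (fun k => (nrm k) ^ 2 * ‖u k‖ ^ 2) →
        Summable (fun k => (nrm k) ^ 4 * ‖u k‖ ^ 2) →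
        ∀ lam : ℝ, Real.exp 1 ≤ lam →
          (∑' k : Fin 2 → ℤ, ‖u k‖)
            ≤ C * (Real.log lam) ^ ((1:ℝ)/2) *
                  (∑' k : Fin 2 → ℤ, (nrm k) ^ 2 * ‖u k‖ ^ 2) ^ ((1:ℝ)/2)
              + C * lam⁻¹ * (∑' k : Fin 2 → ℤ, (nrm k) ^ 4 * ‖u k‖ ^ 2) ^ ((1:ℝ)/2) := by
  refine ⟨8, by norm_num, fun u hu0 h2 h4 lam hlam => ?_⟩
  have hlam1 : 1 ≤ lam := (Real.one_le_exp zero_le_one).trans hlam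
  have hlog : 1 ≤ Real.log lam := (Real.le_log_iff_exp_le (by linarith)).mpr hlam
  have hlow := sum_inv_nrm_sq_le hlam1
  have hhigh := sum_inv_nrm_pow_four_le (by linarith : 0 < lam)
  have hlow_nonneg : 0 ≤ fun k => if nrm k ≤ lam then (nrm k ^ 2)⁻¹ else 0 :=
    fun k => by dsimp only; split_ifs <;> positivity
  have hhigh_nonneg : 0 ≤ fun k => if lam < nrm k then (nrm k ^ 4)⁻¹ else 0 :=
    fun k => by dsimp only; split_ifs <;> positivity
  have hsplit := tsum_le_of_frequency_split (a := fun k => ‖u k‖) (ν := nrm)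
    (fun k => norm_nonneg _) (fun k => Real.sqrt_nonneg _)
    (fun k hk => by rw [eq_zero_of_nrm_eq_zero hk, hu0, norm_zero]) lam
    (summable_of_sum_le hlow_nonneg hlow) (summable_of_sum_le hhigh_nonneg hhigh) h2 h4
  simp only [← Real.sqrt_eq_rpow]
  refine hsplit.trans ?_
  gcongr <;> refine Real.sqrt_le_iff.mpr ⟨by positivity, ?_⟩
  · rw [mul_pow, Real.sq_sqrt (by linarith)]
    linarith [Real.tsum_le_of_sum_le hlow_nonneg hlow]
  · rw [mul_pow, inv_pow, ← div_eq_mul_inv]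
    exact (Real.tsum_le_of_sum_le hhigh_nonneg hhigh).trans_eq (by norm_num)
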